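/- Let Q, N ∈ ℕ and (a_n) complex numbers indexed by ℤ[i]. Then ∑_{q ∈ ℤ[i]\{0\}, N(q) ≤ Q} ∑_{a mod q², (a,q)=1} |∑_{N(n) ≤ N} a_n e(Re(na/q²))|² ≪ Q(N + Q²) · ∑_{N(n) ≤ N} |a_n|². -/

import Mathlib

open Complex Real GaussianInt

/-!
Fix `q ≠ 0`. Enlarging the sum over unit residues `b mod q²` to all residues, orthogonality of
the characters `n ↦ e(Re(n b / q²))` of `ℤ[i]/(q²)` turns the sum into
`#(ℤ[i]/(q²)) · ∑_c |∑_{n ≡ c} a_n|²`. Cauchy–Schwarz in each class, together with the lattice point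
counts `#(ℤ[i]/(q²)) ≪ N(q)²` and `#{N(n) ≤ N, n ≡ c mod q²} ≪ N / N(q)² + 1`, gives the
single-modulus bound `≪ (N + N(q)²) Z`. Summing it over the `≪ Q` moduli of norm at most `Q`
gives the claim.
-/

open Finset ComplexConjugate

local notation "ℤ[i]" => GaussianInt

theorem sum_norm_sq_sum_mul_eq {ι κ : Type*} [Fintype ι] [Fintype κ] [DecidableEq ι]
    {χ : ι → κ → ℂ} {K : ℝ}
    (horth : ∀ i j, ∑ x, χ i x * conj (χ j x) = if i = j then (K : ℂ) else 0) (F : ι → ℂ) :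
    ∑ x, ‖∑ i, F i * χ i x‖ ^ 2 = K * ∑ i, ‖F i‖ ^ 2 := by
  apply Complex.ofReal_injective
  push_cast
  simp_rw [← mul_conj', map_sum, map_mul, sum_mul_sum, mul_sum]
  rw [sum_comm]
  refine sum_congr rfl fun i _ => ?_
  rw [sum_comm]
  simp_rw [show ∀ j x, F i * χ i x * (conj (F j) * conj (χ j x)) =
    F i * conj (F j) * (χ i x * conj (χ j x)) from fun _ _ => by ring, ← mul_sum, horth]
  simp [mul_comm]

theorem sum_norm_sq_sum_fiber_le {α β : Type*} [Fintype β] [DecidableEq β] (T : Finset α)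
    (f : α → β) (a : α → ℂ) {M : ℝ} (hM : ∀ c, (#{n ∈ T | f n = c} : ℝ) ≤ M) :
    ∑ c, ‖∑ n ∈ T with f n = c, a n‖ ^ 2 ≤ M * ∑ n ∈ T, ‖a n‖ ^ 2 := by
  rw [← sum_fiberwise T f, mul_sum]
  refine sum_le_sum fun c _ => ?_
  calc ‖∑ n ∈ T with f n = c, a n‖ ^ 2 ≤ (∑ n ∈ T with f n = c, ‖a n‖) ^ 2 := by
        gcongr; exact norm_sum_le _ _
    _ ≤ #{n ∈ T | f n = c} * ∑ n ∈ T with f n = c, ‖a n‖ ^ 2 := sq_sum_le_card_mul_sum_sq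
    _ ≤ M * ∑ n ∈ T with f n = c, ‖a n‖ ^ 2 := by gcongr; exact hM c

theorem exp_two_pi_I_mul_eq_one_iff {t : ℝ} : Complex.exp (2 * π * I * t) = 1 ↔ ∃ k : ℤ, t = k := by
  rw [Complex.exp_eq_one_iff]
  refine exists_congr fun k => ⟨fun h => ?_, fun h => by rw [h]; push_cast; ring⟩
  have h2πI : (2 * π * I : ℂ) ≠ 0 := by simp [pi_ne_zero, I_ne_zero]
  exact_mod_cast mul_left_cancel₀ h2πI (h.trans (mul_comm _ _))

theorem sq_two_mul_add_one_mul_le {ν s : ℝ} (hν : 1 ≤ ν) (hs : 0 ≤ s) :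
    (2 * ν + 1) ^ 2 * (4 * s / ν + 1) ^ 2 ≤ 288 * (s ^ 2 + ν ^ 2) := by
  have hprod : (2 * ν + 1) * (4 * s / ν + 1) ≤ 12 * s + 3 * ν := by
    have hsν : s / ν ≤ s := div_le_self hs hν
    have : (2 * ν + 1) * (4 * s / ν + 1) = 8 * s + 4 * (s / ν) + 2 * ν + 1 := by
      field_simp; ring
    linarith
  calc (2 * ν + 1) ^ 2 * (4 * s / ν + 1) ^ 2 = ((2 * ν + 1) * (4 * s / ν + 1)) ^ 2 := by ring
    _ ≤ (12 * s + 3 * ν) ^ 2 := by gcongr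
    _ ≤ 288 * (s ^ 2 + ν ^ 2) := by nlinarith [sq_nonneg (4 * s - ν)]

namespace GaussianInt

theorem re_im_mem_Icc_of_norm_le {z : ℤ[i]} {B : ℝ} (h : ‖(z : ℂ)‖ ≤ B) :
    (z.re, z.im) ∈ Icc (-⌊B⌋) ⌊B⌋ ×ˢ Icc (-⌊B⌋) ⌊B⌋ := by
  have hre : |(z.re : ℝ)| ≤ B := (intCast_re z ▸ abs_re_le_norm _).trans h
  have him : |(z.im : ℝ)| ≤ B := (intCast_im z ▸ abs_im_le_norm _).trans h
  rw [abs_le] at hre him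
  simp only [mem_product, mem_Icc, neg_le, Int.le_floor]
  push_cast
  exact ⟨⟨by linarith, hre.2⟩, by linarith, him.2⟩

theorem card_le_of_norm_le {s : Finset ℤ[i]} {B : ℝ} (h : ∀ z ∈ s, ‖(z : ℂ)‖ ≤ B) :
    (#s : ℝ) ≤ (2 * B + 1) ^ 2 := by
  rcases s.eq_empty_or_nonempty with rfl | ⟨z, hz⟩
  · simp only [card_empty, CharP.cast_eq_zero]; positivity
  have hB : 0 ≤ B := (_root_.norm_nonneg _).trans (h z hz)
  have hcard : #s ≤ #(Icc (-⌊B⌋) ⌊B⌋ ×ˢ Icc (-⌊B⌋) ⌊B⌋) :=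
    card_le_card_of_injOn (fun z => (z.re, z.im)) (fun z hz => re_im_mem_Icc_of_norm_le (h z hz))
      fun z _ w _ hzw => Zsqrtd.ext (congrArg Prod.fst hzw) (congrArg Prod.snd hzw)
  have hfloor : 0 ≤ ⌊B⌋ := Int.floor_nonneg.mpr hB
  rw [card_product, Int.card_Icc, ← sq] at hcard
  calc (#s : ℝ) ≤ (((⌊B⌋ + 1 - -⌊B⌋).toNat ^ 2 : ℕ) : ℝ) := by exact_mod_cast hcard
    _ = (2 * ⌊B⌋ + 1 : ℝ) ^ 2 := by
      rw [Nat.cast_pow, ← Int.cast_natCast, Int.toNat_of_nonneg (by omega)]; push_cast; ring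
    _ ≤ (2 * B + 1) ^ 2 := by gcongr; exact Int.floor_le B

theorem card_le_of_dvd_sub {s : Finset ℤ[i]} {d : ℤ[i]} (hd : d ≠ 0) {R : ℝ}
    (hR : ∀ z ∈ s, ‖(z : ℂ)‖ ≤ R) (hdvd : ∀ z ∈ s, ∀ w ∈ s, d ∣ z - w) :
    (#s : ℝ) ≤ (2 * (2 * R / ‖(d : ℂ)‖) + 1) ^ 2 := by
  rcases s.eq_empty_or_nonempty with rfl | ⟨z₀, hz₀⟩
  · simp only [card_empty, CharP.cast_eq_zero]; positivity
  have hd' : 0 < ‖(d : ℂ)‖ := norm_pos_iff.mpr (toComplex_eq_zero.not.mpr hd)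
  have hmul : ∀ z ∈ s, d * ((z - z₀) / d) = z - z₀ := fun z hz =>
    EuclideanDomain.mul_div_cancel' hd (hdvd z hz z₀ hz₀)
  have hinj : Set.InjOn (fun z => (z - z₀) / d) s := fun z hz w hw hzw => by
    simpa using (hmul z hz).symm.trans ((congrArg (d * ·) hzw).trans (hmul w hw))
  rw [← card_image_of_injOn hinj]
  refine card_le_of_norm_le fun k hk => ?_
  obtain ⟨z, hz, rfl⟩ := mem_image.mp hk
  rw [le_div_iff₀ hd', mul_comm, ← norm_mul, ← toComplex_mul, hmul z hz, toComplex_sub]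
  linarith [norm_sub_le (z : ℂ) z₀, hR z hz, hR z₀ hz₀]

theorem sq_norm_toComplex (z : ℤ[i]) : ‖(z : ℂ)‖ ^ 2 = z.norm := by
  rw [intCast_real_norm, Complex.sq_norm]

theorem card_le_nine_mul_of_norm_le {s : Finset ℤ[i]} {Q : ℕ} (hs : ∀ q ∈ s, q ≠ 0 ∧ q.norm ≤ Q) :
    (#s : ℝ) ≤ 9 * Q := by
  rcases s.eq_empty_or_nonempty with rfl | ⟨q, hq⟩
  · simp
  have hQ : (1 : ℝ) ≤ √Q := by
    rw [one_le_sqrt]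
    exact_mod_cast (norm_pos.mpr (hs q hq).1).trans_le (hs q hq).2
  calc (#s : ℝ) ≤ (2 * √Q + 1) ^ 2 := card_le_of_norm_le fun z hz => by
        rw [Real.le_sqrt (_root_.norm_nonneg _) Q.cast_nonneg, sq_norm_toComplex]
        exact_mod_cast (hs z hz).2
    _ ≤ (3 * √Q) ^ 2 := by gcongr; linarith
    _ = 9 * Q := by rw [mul_pow, sq_sqrt Q.cast_nonneg]; norm_num

theorem one_le_norm_toComplex {d : ℤ[i]} (hd : d ≠ 0) : 1 ≤ ‖(d : ℂ)‖ := by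
  rw [← one_le_sq_iff₀ (_root_.norm_nonneg _), sq_norm_toComplex]
  exact_mod_cast norm_pos.mpr hd

theorem norm_toComplex_mod_lt {d : ℤ[i]} (hd : d ≠ 0) (z : ℤ[i]) :
    ‖((z % d : ℤ[i]) : ℂ)‖ < ‖(d : ℂ)‖ := by
  rw [← pow_lt_pow_iff_left₀ (_root_.norm_nonneg _) (_root_.norm_nonneg _) two_ne_zero,
    sq_norm_toComplex, sq_norm_toComplex]
  exact_mod_cast norm_mod_lt z hd

theorem out_mod_injective (d : ℤ[i]) :
    Function.Injective fun x : ℤ[i] ⧸ Ideal.span {d} => x.out % d := by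
  have hmk (z : ℤ[i]) : Ideal.Quotient.mk (Ideal.span {d}) (z % d) = Ideal.Quotient.mk _ z := by
    rw [Ideal.Quotient.eq, Ideal.mem_span_singleton, EuclideanDomain.mod_eq_sub_mul_div]
    exact ⟨-(z / d), by ring⟩
  intro x y hxy
  have := congrArg (Ideal.Quotient.mk (Ideal.span {d})) hxy
  rwa [hmk, hmk, Ideal.Quotient.mk_out, Ideal.Quotient.mk_out] at this

theorem finite_quotient_span {d : ℤ[i]} (hd : d ≠ 0) : Finite (ℤ[i] ⧸ Ideal.span {d}) :=
  Finite.of_injective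
    (fun x => (⟨_, re_im_mem_Icc_of_norm_le (norm_toComplex_mod_lt hd x.out).le⟩ :
      ↥(Icc (-⌊‖(d : ℂ)‖⌋) ⌊‖(d : ℂ)‖⌋ ×ˢ Icc (-⌊‖(d : ℂ)‖⌋) ⌊‖(d : ℂ)‖⌋)))
    fun _ _ hxy => out_mod_injective d <| Zsqrtd.ext (congrArg (·.1.1) hxy) (congrArg (·.1.2) hxy)

theorem card_quotient_span_le {d : ℤ[i]} (hd : d ≠ 0) [Fintype (ℤ[i] ⧸ Ideal.span {d})] :
    (Fintype.card (ℤ[i] ⧸ Ideal.span {d}) : ℝ) ≤ (2 * ‖(d : ℂ)‖ + 1) ^ 2 := by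
  rw [← card_univ, ← card_image_of_injective _ (out_mod_injective d)]
  exact card_le_of_norm_le fun z hz => by
    obtain ⟨x, -, rfl⟩ := mem_image.mp hz
    exact (norm_toComplex_mod_lt hd x.out).le

noncomputable def expReDiv (d n b : ℤ[i]) : ℂ := Complex.exp (2 * π * I * ((n * b / d : ℂ).re : ℝ))

theorem expReDiv_comm (d n b : ℤ[i]) : expReDiv d n b = expReDiv d b n := by
  rw [expReDiv, expReDiv, mul_comm (n : ℂ)]

theorem expReDiv_add_right (d n b b' : ℤ[i]) :
    expReDiv d n (b + b') = expReDiv d n b * expReDiv d n b' := by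
  simp only [expReDiv, ← Complex.exp_add, toComplex_add, mul_add, add_div, add_re, ofReal_add]

theorem expReDiv_mul_conj (d n n' b : ℤ[i]) :
    expReDiv d n b * conj (expReDiv d n' b) = expReDiv d (n - n') b := by
  rw [expReDiv, expReDiv, expReDiv, ← Complex.exp_conj, ← Complex.exp_add]
  simp only [map_mul, conj_ofReal, conj_I, map_ofNat, toComplex_sub, sub_mul, sub_div, sub_re,
    ofReal_sub]
  ring_nf

theorem expReDiv_eq_one_of_dvd {d n b : ℤ[i]} (hd : d ≠ 0) (h : d ∣ b) : expReDiv d n b = 1 := by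
  obtain ⟨u, rfl⟩ := h
  have hd' : (d : ℂ) ≠ 0 := toComplex_eq_zero.not.mpr hd
  have : (n * ↑(d * u) / d : ℂ) = ↑(n * u) := by
    rw [toComplex_mul, toComplex_mul]; field_simp
  rw [expReDiv, this, ← intCast_re, exp_two_pi_I_mul_eq_one_iff]
  exact ⟨_, rfl⟩

theorem dvd_of_expReDiv_eq_one {d m : ℤ[i]} (hd : d ≠ 0) (h₁ : expReDiv d m 1 = 1)
    (hi : expReDiv d m ⟨0, 1⟩ = 1) : d ∣ m := by
  obtain ⟨k₁, hk₁⟩ := exp_two_pi_I_mul_eq_one_iff.mp h₁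
  obtain ⟨k₂, hk₂⟩ := exp_two_pi_I_mul_eq_one_iff.mp hi
  -- `b = 1` and `b = i` read off `Re (m / d) = k₁` and `Im (m / d) = -k₂`.
  have hquot : (m / d : ℂ) = (⟨k₁, -k₂⟩ : ℤ[i]) := by
    have hI : ((⟨0, 1⟩ : ℤ[i]) : ℂ) = I := by simp [toComplex_def']
    rw [hI, mul_div_right_comm, mul_I_re] at hk₂
    apply Complex.ext
    · simpa using hk₁
    · rw [im_toComplex]; push_cast; linarith
  refine ⟨⟨k₁, -k₂⟩, toComplex_injective ?_⟩
  rw [toComplex_mul, ← hquot, mul_div_cancel₀ _ (toComplex_eq_zero.not.mpr hd)]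

theorem expReDiv_congr {d n b b' : ℤ[i]} (hd : d ≠ 0)
    (h : Ideal.Quotient.mk (Ideal.span {d}) b = Ideal.Quotient.mk _ b') :
    expReDiv d n b = expReDiv d n b' := by
  rw [Ideal.Quotient.eq, Ideal.mem_span_singleton] at h
  rw [show b = b' + (b - b') by ring, expReDiv_add_right, expReDiv_eq_one_of_dvd hd h, mul_one]

theorem expReDiv_out_mk {d : ℤ[i]} (hd : d ≠ 0) (n b : ℤ[i]) :
    expReDiv d n (Ideal.Quotient.mk (Ideal.span {d}) b).out = expReDiv d n b :=
  expReDiv_congr hd (Ideal.Quotient.mk_out _)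

noncomputable def expReDivChar {d : ℤ[i]} (hd : d ≠ 0) (m : ℤ[i]) :
    AddChar (ℤ[i] ⧸ Ideal.span {d}) ℂ where
  toFun x := expReDiv d m x.out
  map_zero_eq_one' := by
    rw [expReDiv_congr hd (b' := 0) (by simp), expReDiv_eq_one_of_dvd hd (dvd_zero _)]
  map_add_eq_mul' x y := by
    rw [expReDiv_congr hd (b' := x.out + y.out) (by simp), expReDiv_add_right]

theorem sum_expReDiv_out_mul_conj {d : ℤ[i]} (hd : d ≠ 0) [Fintype (ℤ[i] ⧸ Ideal.span {d})]
    [DecidableEq (ℤ[i] ⧸ Ideal.span {d})] (c c' : ℤ[i] ⧸ Ideal.span {d}) :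
    ∑ x : ℤ[i] ⧸ Ideal.span {d}, expReDiv d c.out x.out * conj (expReDiv d c'.out x.out) =
      if c = c' then (Fintype.card (ℤ[i] ⧸ Ideal.span {d}) : ℂ) else 0 := by
  have hdvd : d ∣ c.out - c'.out ↔ c = c' := by
    rw [← Ideal.mem_span_singleton, ← Ideal.Quotient.eq, Ideal.Quotient.mk_out,
      Ideal.Quotient.mk_out]
  simp_rw [expReDiv_mul_conj]
  split_ifs with hc
  · simp [expReDiv_comm d (c.out - c'.out), expReDiv_eq_one_of_dvd hd (hdvd.mpr hc)]
  refine AddChar.sum_eq_zero_of_ne_one (ψ := expReDivChar hd (c.out - c'.out)) fun hψ => hc ?_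
  have hψ' (b : ℤ[i]) : expReDiv d (c.out - c'.out) b = 1 := by
    simpa [expReDivChar, expReDiv_out_mk hd] using DFunLike.congr_fun hψ (Ideal.Quotient.mk _ b)
  exact hdvd.mp (dvd_of_expReDiv_eq_one hd (hψ' 1) (hψ' _))

theorem sum_norm_sq_sum_expReDiv_out {d : ℤ[i]} (hd : d ≠ 0) [Fintype (ℤ[i] ⧸ Ideal.span {d})]
    [DecidableEq (ℤ[i] ⧸ Ideal.span {d})] (T : Finset ℤ[i]) (a : ℤ[i] → ℂ) :
    ∑ x : ℤ[i] ⧸ Ideal.span {d}, ‖∑ n ∈ T, a n * expReDiv d n x.out‖ ^ 2 =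
      Fintype.card (ℤ[i] ⧸ Ideal.span {d}) *
        ∑ c : ℤ[i] ⧸ Ideal.span {d}, ‖∑ n ∈ T with Ideal.Quotient.mk _ n = c, a n‖ ^ 2 := by
  have hfiber (x : ℤ[i] ⧸ Ideal.span {d}) : ∑ n ∈ T, a n * expReDiv d n x.out =
      ∑ c : ℤ[i] ⧸ Ideal.span {d},
        (∑ n ∈ T with Ideal.Quotient.mk _ n = c, a n) * expReDiv d c.out x.out := by
    rw [← sum_fiberwise T (Ideal.Quotient.mk (Ideal.span {d}))]
    refine sum_congr rfl fun c _ => ?_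
    rw [sum_mul]
    refine sum_congr rfl fun n hn => ?_
    rw [expReDiv_comm d n, expReDiv_comm d c.out,
      expReDiv_congr hd ((mem_filter.mp hn).2.trans (Ideal.Quotient.mk_out c).symm)]
  simp_rw [hfiber]
  exact sum_norm_sq_sum_mul_eq (sum_expReDiv_out_mul_conj hd) _

theorem card_filter_mk_le {d : ℤ[i]} (hd : d ≠ 0) [DecidableEq (ℤ[i] ⧸ Ideal.span {d})]
    {N : ℕ} {T : Finset ℤ[i]} (hT : ∀ n ∈ T, n.norm ≤ N) (c : ℤ[i] ⧸ Ideal.span {d}) :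
    (#{n ∈ T | Ideal.Quotient.mk _ n = c} : ℝ) ≤ (4 * √N / ‖(d : ℂ)‖ + 1) ^ 2 := by
  convert card_le_of_dvd_sub hd (R := √N) (fun n hn => ?_) (fun n hn m hm => ?_) using 2
  · ring
  · rw [Real.le_sqrt (_root_.norm_nonneg _) N.cast_nonneg, sq_norm_toComplex]
    exact_mod_cast hT n (mem_filter.mp hn).1
  · rw [← Ideal.mem_span_singleton, ← Ideal.Quotient.eq, (mem_filter.mp hn).2,
      (mem_filter.mp hm).2]

theorem sum_norm_sq_sum_expReDiv_le {d : ℤ[i]} (hd : d ≠ 0) {N : ℕ} (a : ℤ[i] → ℂ)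
    {T : Finset ℤ[i]} (hT : ∀ n ∈ T, n.norm ≤ N) {A : Finset ℤ[i]}
    (hA : Set.BijOn (Ideal.Quotient.mk (Ideal.span {d})) A {x | IsUnit x}) :
    ∑ b ∈ A, ‖∑ n ∈ T, a n * expReDiv d n b‖ ^ 2 ≤
      288 * (N + ‖(d : ℂ)‖ ^ 2) * ∑ n ∈ T, ‖a n‖ ^ 2 := by
  classical
  have := finite_quotient_span hd
  let _ := Fintype.ofFinite (ℤ[i] ⧸ Ideal.span {d})
  calc ∑ b ∈ A, ‖∑ n ∈ T, a n * expReDiv d n b‖ ^ 2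
      = ∑ x : ℤ[i] ⧸ Ideal.span {d} with IsUnit x, ‖∑ n ∈ T, a n * expReDiv d n x.out‖ ^ 2 :=
        sum_nbij _ (fun b hb => mem_filter.mpr ⟨mem_univ _, hA.mapsTo hb⟩) hA.injOn
          (fun x hx => hA.surjOn (mem_filter.mp hx).2) fun b _ => by simp_rw [expReDiv_out_mk hd]
    _ ≤ ∑ x : ℤ[i] ⧸ Ideal.span {d}, ‖∑ n ∈ T, a n * expReDiv d n x.out‖ ^ 2 :=
        sum_le_sum_of_subset_of_nonneg (filter_subset _ _) fun _ _ _ => by positivity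
    _ = Fintype.card (ℤ[i] ⧸ Ideal.span {d}) *
          ∑ c, ‖∑ n ∈ T with Ideal.Quotient.mk _ n = c, a n‖ ^ 2 :=
        sum_norm_sq_sum_expReDiv_out hd T a
    _ ≤ (2 * ‖(d : ℂ)‖ + 1) ^ 2 * ((4 * √N / ‖(d : ℂ)‖ + 1) ^ 2 * ∑ n ∈ T, ‖a n‖ ^ 2) := by
        gcongr
        · exact card_quotient_span_le hd
        · exact sum_norm_sq_sum_fiber_le T _ a (card_filter_mk_le hd hT)
    _ ≤ 288 * (√N ^ 2 + ‖(d : ℂ)‖ ^ 2) * ∑ n ∈ T, ‖a n‖ ^ 2 := by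
        rw [← mul_assoc]
        exact mul_le_mul_of_nonneg_right
          (sq_two_mul_add_one_mul_le (one_le_norm_toComplex hd) (sqrt_nonneg _)) (by positivity)
    _ = 288 * (N + ‖(d : ℂ)‖ ^ 2) * ∑ n ∈ T, ‖a n‖ ^ 2 := by rw [sq_sqrt N.cast_nonneg]

end GaussianInt

/-- Large sieve with square moduli in ℤ[i]: the bound `Q (N + Q²)` obtained by
summing the single-modulus bound over all `q` of norm at most `Q`. -/
theorem square_moduli_large_sieve_trivial :
    ∃ C : ℝ, 0 < C ∧
      ∀ (Q N : ℕ) (a : GaussianInt → ℂ),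
      ∀ T : Finset GaussianInt, (∀ n : GaussianInt, n ∈ T ↔ Zsqrtd.norm n ≤ (N : ℤ)) →
      ∀ QS : Finset GaussianInt, (∀ q : GaussianInt, q ∈ QS ↔ q ≠ 0 ∧ Zsqrtd.norm q ≤ (Q : ℤ)) →
      ∀ A : GaussianInt → Finset GaussianInt,
        (∀ q ∈ QS, Set.BijOn (fun x => Ideal.Quotient.mk (Ideal.span {q ^ 2}) x) ↑(A q)
          {x : GaussianInt ⧸ Ideal.span {q ^ 2} | IsUnit x}) →
        ∑ q ∈ QS, ∑ b ∈ A q,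
            ‖∑ n ∈ T, a n * Complex.exp (2 * π * Complex.I *
                ((GaussianInt.toComplex n * GaussianInt.toComplex b /
                  (GaussianInt.toComplex q) ^ 2).re : ℝ))‖ ^ 2
          ≤ C * (Q : ℝ) * ((N : ℝ) + (Q : ℝ) ^ 2) * ∑ n ∈ T, ‖a n‖ ^ 2 := by
  refine ⟨9 * 288, by norm_num, fun Q N a T hT QS hQS A hA => ?_⟩
  have hsingle (q : ℤ[i]) (hq : q ∈ QS) :
      ∑ b ∈ A q, ‖∑ n ∈ T, a n * Complex.exp (2 * π * I *
          ((toComplex n * toComplex b / toComplex q ^ 2).re : ℝ))‖ ^ 2 ≤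
        288 * (N + (Q : ℝ) ^ 2) * ∑ n ∈ T, ‖a n‖ ^ 2 := by
    obtain ⟨hq0, hqQ⟩ := (hQS q).mp hq
    have hqQ' : (q.norm : ℝ) ≤ Q := by exact_mod_cast hqQ
    calc _ = ∑ b ∈ A q, ‖∑ n ∈ T, a n * expReDiv (q ^ 2) n b‖ ^ 2 := by
          simp only [expReDiv, map_pow]
      _ ≤ 288 * (N + (q.norm : ℝ) ^ 2) * ∑ n ∈ T, ‖a n‖ ^ 2 := by
          simpa only [map_pow, norm_pow, sq_norm_toComplex] using
            sum_norm_sq_sum_expReDiv_le (pow_ne_zero 2 hq0) a (fun n hn => (hT n).mp hn) (hA q hq)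
      _ ≤ 288 * (N + (Q : ℝ) ^ 2) * ∑ n ∈ T, ‖a n‖ ^ 2 := by
          gcongr
          exact_mod_cast GaussianInt.norm_nonneg q
  calc _ ≤ ∑ q ∈ QS, 288 * (N + (Q : ℝ) ^ 2) * ∑ n ∈ T, ‖a n‖ ^ 2 := sum_le_sum hsingle
    _ = #QS * (288 * (N + (Q : ℝ) ^ 2) * ∑ n ∈ T, ‖a n‖ ^ 2) := by rw [sum_const, nsmul_eq_mul]
    _ ≤ 9 * Q * (288 * (N + (Q : ℝ) ^ 2) * ∑ n ∈ T, ‖a n‖ ^ 2) := by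
        gcongr
        exact card_le_nine_mul_of_norm_le fun q hq => (hQS q).mp hq
    _ = 9 * 288 * Q * (N + (Q : ℝ) ^ 2) * ∑ n ∈ T, ‖a n‖ ^ 2 := by ring
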